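/- arXiv:2302.01875 — 3 statements merged into one kernel-verified Lean document; each statement's English description precedes it below -/
import Mathlib

section
/- Let k ≥ 5 be an integer and let H be a weighted graph with edge weights ω: E(H) → {3,4,5}. If H contains no cycle of odd total weight smaller than 2k+1, then for every vertex u of H the set N_ω^{k-3}[u] of vertices at weighted distance at most k−3 from u induces a weighted bipartite subgraph of H. -/
/-!
Fix a walk `P x` from `u` of weight at most `k - 3` to every vertex `x` of the ball. For an
edge `xy` inside the ball, the closed walk `P x · xy · (P y)⁻¹` weighs at most
`2(k - 3) + 5 < 2k + 1`. A closed walk of odd weight contains an odd cycle that is no heavier,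
so this walk has even weight, i.e. `ω(xy) ≡ wt (P x) + wt (P y) (mod 2)`. Summing along any
closed walk in the ball, these parities telescope to `0`.
-/

open SimpleGraph

/-- The total weight of a walk: the sum of the weights of its edges. -/
def SimpleGraph.Walk.wt {V : Type*} {G : SimpleGraph V} {u v : V}
    (ω : Sym2 V → ℕ) (w : G.Walk u v) : ℕ :=
  (w.edges.map ω).sum

/-- The induced subgraph on `B` is weighted bipartite:
it contains no cycle of odd total weight. -/
def weightedBipartiteOn {V : Type*} (G : SimpleGraph V) (ω : Sym2 V → ℕ)
    (B : Set V) : Prop :=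
  ∀ ⦃v : V⦄ (c : G.Walk v v), c.IsCycle → (∀ x ∈ c.support, x ∈ B) → ¬ Odd (c.wt ω)

/-- `closedNbhd G i B` is the set of vertices at (unweighted) graph distance
at most `i` from the set `B`. -/
def closedNbhd {V : Type*} (G : SimpleGraph V) (i : ℕ) (B : Set V) : Set V :=
  {x | ∃ b ∈ B, ∃ w : G.Walk b x, w.length ≤ i}

/-- `wBall G ω u i` is the set of vertices at weighted distance at most `i` from `u`. -/
def wBall {V : Type*} (G : SimpleGraph V) (ω : Sym2 V → ℕ) (u : V) (i : ℕ) : Set V :=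
  {x | ∃ w : G.Walk u x, w.IsPath ∧ w.wt ω ≤ i}

namespace SimpleGraph.Walk

variable {V : Type*} {G : SimpleGraph V} (ω : Sym2 V → ℕ)

@[simp] lemma wt_nil {x : V} : (nil : G.Walk x x).wt ω = 0 := rfl

@[simp] lemma wt_cons {x y z : V} (h : G.Adj x y) (p : G.Walk y z) :
    (cons h p).wt ω = ω s(x, y) + p.wt ω := by
  simp [wt]

@[simp] lemma wt_append {x y z : V} (p : G.Walk x y) (q : G.Walk y z) :
    (p.append q).wt ω = p.wt ω + q.wt ω := by
  simp [wt, edges_append]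

@[simp] lemma wt_reverse {x y : V} (p : G.Walk x y) : p.reverse.wt ω = p.wt ω := by
  simp [wt, edges_reverse, List.sum_reverse]

variable {ω}

lemma IsPath.eq_cons_nil_of_mem_edges {u v : V} {p : G.Walk v u} (hp : p.IsPath)
    (h : G.Adj u v) (he : s(u, v) ∈ p.edges) : p = cons h.symm Walk.nil := by
  cases p with
  | nil => simp at he
  | cons h' q =>
    rw [cons_isPath_iff] at hp
    rw [edges_cons, List.mem_cons, Sym2.eq_swap, Sym2.congr_right] at he
    rcases he with rfl | he
    · cases (isPath_iff_nil.1 hp.1).eq_nil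
      rfl
    · exact absurd (q.fst_mem_support_of_mem_edges he) hp.2

lemma exists_eq_append_append_of_not_isPath {u v : V} (p : G.Walk u v) (hp : ¬ p.IsPath) :
    ∃ (y : V) (p₁ : G.Walk u y) (q : G.Walk y y) (p₂ : G.Walk y v),
      ¬ q.Nil ∧ p = p₁.append (q.append p₂) := by
  classical
  induction p with
  | nil => exact absurd IsPath.nil hp
  | @cons u _ _ h p ih =>
    by_cases hp' : p.IsPath
    · have hu : u ∈ p.support := by simpa [cons_isPath_iff, hp'] using hp
      exact ⟨u, Walk.nil, cons h (p.takeUntil u hu), p.dropUntil u hu, not_nil_cons,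
        by simp [p.take_spec hu]⟩
    · obtain ⟨y, p₁, q, p₂, hq, rfl⟩ := ih hp'
      exact ⟨y, cons h p₁, q, p₂, hq, rfl⟩

/-- A closed walk that is not a cycle either backtracks along its first edge, and then has even
weight, or splits at a repeated vertex into two shorter closed walks whose weights add up. -/
theorem exists_isCycle_odd_wt_le {x : V} (w : G.Walk x x) (hw : Odd (w.wt ω)) :
    ∃ (y : V) (c : G.Walk y y), c.IsCycle ∧ Odd (c.wt ω) ∧ c.wt ω ≤ w.wt ω := by
  match w with
  | nil => simp at hw
  | cons (v := b) h p =>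
    by_cases hp : p.IsPath
    · by_cases he : s(x, b) ∈ p.edges
      · rw [hp.eq_cons_nil_of_mem_edges h he] at hw
        simp only [wt_cons, wt_nil, Sym2.eq_swap (a := b), add_zero] at hw
        exact absurd hw (Nat.not_odd_iff_even.2 (Even.add_self _))
      · exact ⟨x, _, (cons_isCycle_iff p h).2 ⟨hp, he⟩, hw, le_rfl⟩
    · obtain ⟨y, p₁, q, p₂, hq, hpq⟩ := exists_eq_append_append_of_not_isPath p hp
      have hsum : (cons h p).wt ω = q.wt ω + (cons h (p₁.append p₂)).wt ω := by
        simp only [hpq, wt_cons, wt_append]; ring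
      rw [hsum] at hw ⊢
      rcases Nat.even_or_odd (q.wt ω) with hq' | hq'
      · obtain ⟨z, c, hc, hodd, hle⟩ :=
          exists_isCycle_odd_wt_le (cons h (p₁.append p₂)) ((Nat.odd_add'.1 hw).2 hq')
        exact ⟨z, c, hc, hodd, by omega⟩
      · obtain ⟨z, c, hc, hodd, hle⟩ := exists_isCycle_odd_wt_le q hq'
        exact ⟨z, c, hc, hodd, by omega⟩
termination_by w.length
decreasing_by
  all_goals simp only [hpq, length_cons, length_append]
  all_goals have := not_nil_iff_lt_length.1 hq
  all_goals omega

lemma even_wt_of_wt_lt {N : ℕ}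
    (hN : ∀ (v : V) (c : G.Walk v v), c.IsCycle → Odd (c.wt ω) → N ≤ c.wt ω)
    {x : V} (w : G.Walk x x) (hw : w.wt ω < N) : Even (w.wt ω) := by
  by_contra hodd
  obtain ⟨y, c, hc, hc_odd, hle⟩ := w.exists_isCycle_odd_wt_le (Nat.not_even_iff_odd.1 hodd)
  have := hN y c hc hc_odd
  omega

lemma natCast_wt_eq_add {B : Set V} {g : V → ZMod 2}
    (hg : ∀ x ∈ B, ∀ y ∈ B, G.Adj x y → (ω s(x, y) : ZMod 2) = g x + g y) {a b : V}
    (q : G.Walk a b) (hq : ∀ x ∈ q.support, x ∈ B) : (q.wt ω : ZMod 2) = g a + g b := by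
  induction q with
  | nil => simp [CharTwo.add_self_eq_zero]
  | @cons x y z h p ih =>
    simp only [support_cons, List.mem_cons, forall_eq_or_imp] at hq
    rw [wt_cons, Nat.cast_add, hg x hq.1 y (hq.2 y p.start_mem_support) h, ih hq.2]
    grind

end SimpleGraph.Walk

/-- Let `k ≥ 5` and let `H` be a weighted graph with weights in `{3,4,5}`
and without cycles of odd total weight smaller than `2k+1`. Then for any vertex `u`, the
weighted ball `N_ω^{k-3}[u]` is weighted bipartite. -/
theorem stmt6 {V : Type*} (k : ℕ) (hk : 5 ≤ k)
    (H : SimpleGraph V) (ω : Sym2 V → ℕ)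
    (hω : ∀ e ∈ H.edgeSet, ω e = 3 ∨ ω e = 4 ∨ ω e = 5)
    (hfree : ∀ (v : V) (c : H.Walk v v), c.IsCycle → Odd (c.wt ω) → 2 * k + 1 ≤ c.wt ω)
    (u : V) :
    weightedBipartiteOn H ω (wBall H ω u (k - 3)) := by
  classical
  set B := wBall H ω u (k - 3)
  intro v c _ hcB hodd
  have hB : ∀ x ∈ B, ∃ P : H.Walk u x, P.wt ω ≤ k - 3 := fun x ⟨P, _, hP⟩ => ⟨P, hP⟩
  choose P hP using hB
  let g : V → ZMod 2 := fun x => if hx : x ∈ B then ((P x hx).wt ω : ZMod 2) else 0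
  have hg : ∀ x ∈ B, ∀ y ∈ B, H.Adj x y → (ω s(x, y) : ZMod 2) = g x + g y := by
    intro x hx y hy hxy
    have hxy_le : ω s(x, y) ≤ 5 := by have := hω _ (H.mem_edgeSet.2 hxy); omega
    have hx_le := hP x hx
    have hy_le := hP y hy
    have heven :=
      Walk.even_wt_of_wt_lt hfree ((P x hx).append (Walk.cons hxy (P y hy).reverse)) (by
        simp only [Walk.wt_append, Walk.wt_cons, Walk.wt_reverse]; omega)
    rw [← ZMod.natCast_eq_zero_iff_even] at heven
    simp only [Walk.wt_append, Walk.wt_cons, Walk.wt_reverse, Nat.cast_add] at heven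
    simp only [g, hx, hy, dite_true]
    grind
  have hc_even : (c.wt ω : ZMod 2) = 0 := by
    rw [Walk.natCast_wt_eq_add hg c hcB, CharTwo.add_self_eq_zero]
  exact Nat.not_even_iff_odd.2 hodd (ZMod.natCast_eq_zero_iff_even.1 hc_even)
end

section
/- Let i ≥ 1 be an integer and k ≥ 10i + 15. Let H be a weighted graph with edge weights ω: E(H) → {3,4,5} that contains no cycle of odd total weight smaller than 2k+1. If P is a path in H that has minimal weight among all paths in H between its two end-vertices, then the i-th neighbourhood N^i[P] induces a weighted bipartite subgraph of H. -/
open SimpleGraph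

namespace StmtAux

variable {V : Type*} {G : SimpleGraph V}

lemma wt_nil (ω : Sym2 V → ℕ) {u : V} : (Walk.nil : G.Walk u u).wt ω = 0 := rfl

lemma wt_cons (ω : Sym2 V → ℕ) {u v w : V} (h : G.Adj u v) (p : G.Walk v w) :
    (Walk.cons h p).wt ω = ω s(u, v) + p.wt ω := by
  simp [Walk.wt]

lemma wt_append (ω : Sym2 V → ℕ) {u v w : V} (p : G.Walk u v) (q : G.Walk v w) :
    (p.append q).wt ω = p.wt ω + q.wt ω := by
  simp [Walk.wt, Walk.edges_append]

lemma wt_reverse (ω : Sym2 V → ℕ) {u v : V} (p : G.Walk u v) :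
    p.reverse.wt ω = p.wt ω := by
  simp [Walk.wt, Walk.edges_reverse, List.sum_reverse]

lemma sum_toFinset_le {α : Type*} [DecidableEq α] (f : α → ℕ) :
    ∀ l : List α, (∑ x ∈ l.toFinset, f x) ≤ (l.map f).sum := by
  intro l
  induction l with
  | nil => simp
  | cons a l ih =>
    simp only [List.toFinset_cons, List.map_cons, List.sum_cons]
    by_cases ha : a ∈ l.toFinset
    · rw [Finset.insert_eq_self.mpr ha]
      exact le_trans ih (Nat.le_add_left _ _)
    · rw [Finset.sum_insert ha]
      exact Nat.add_le_add_left ih _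

lemma wt_bypass_le [DecidableEq V] (ω : Sym2 V → ℕ) {u v : V} (p : G.Walk u v) :
    p.bypass.wt ω ≤ p.wt ω := by
  have hnd : p.bypass.edges.Nodup := p.bypass_isPath.isTrail.edges_nodup
  have hsub : p.bypass.edges ⊆ p.edges := p.edges_bypass_subset
  calc p.bypass.wt ω = ∑ e ∈ p.bypass.edges.toFinset, ω e :=
        (List.sum_toFinset _ hnd).symm
    _ ≤ ∑ e ∈ p.edges.toFinset, ω e :=
        Finset.sum_le_sum_of_subset
          (fun e he => List.mem_toFinset.mpr (hsub (List.mem_toFinset.mp he)))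
    _ ≤ p.wt ω := sum_toFinset_le ω _

lemma wt_le_five (ω : Sym2 V → ℕ) (hω : ∀ e ∈ G.edgeSet, ω e = 3 ∨ ω e = 4 ∨ ω e = 5)
    {a b : V} (p : G.Walk a b) : p.wt ω ≤ 5 * p.length := by
  have h5 : ∀ x ∈ p.edges.map ω, x ≤ 5 := by
    intro x hx
    obtain ⟨e, he, rfl⟩ := List.mem_map.mp hx
    rcases hω e (p.edges_subset_edgeSet he) with h | h | h <;> omega
  calc p.wt ω ≤ (p.edges.map ω).length • 5 := List.sum_le_card_nsmul _ _ h5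
    _ = 5 * p.length := by
        simp [List.length_map, Walk.length_edges, smul_eq_mul, Nat.mul_comm]

lemma takeUntil_start [DecidableEq V] {v w : V} (p : G.Walk v w) (h : v ∈ p.support) :
    p.takeUntil v h = Walk.nil := by
  cases p <;> simp [Walk.takeUntil]

lemma takeUntil_cons_ne [DecidableEq V] {a v w u : V} (r : G.Adj a v) (p : G.Walk v w)
    (h : u ∈ (Walk.cons r p).support) (hne : a ≠ u) (h' : u ∈ p.support) :
    (Walk.cons r p).takeUntil u h = Walk.cons r (p.takeUntil u h') := by
  simp [Walk.takeUntil, hne]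

lemma takeUntil_congr [DecidableEq V] {v w u : V} {p p' : G.Walk v w} (h : p = p')
    (hu : u ∈ p.support) : p.takeUntil u hu = p'.takeUntil u (h ▸ hu) := by
  subst h; rfl

lemma takeUntil_takeUntil [DecidableEq V] {v w : V} (p : G.Walk v w) :
    ∀ (b2 : V) (h2 : b2 ∈ p.support) (b1 : V) (h1 : b1 ∈ (p.takeUntil b2 h2).support),
      (p.takeUntil b2 h2).takeUntil b1 h1
        = p.takeUntil b1 (p.support_takeUntil_subset h2 h1) := by
  induction p with
  | nil =>
    intro b2 h2 b1 h1
    have hb2 : b2 = _ := (Walk.mem_support_nil_iff).mp h2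
    subst hb2
    have h1' := h1
    rw [takeUntil_start] at h1'
    have hb1 : b1 = b2 := (Walk.mem_support_nil_iff).mp h1'
    subst hb1
    rw [takeUntil_start, takeUntil_start]
  | cons r q ih =>
    rename_i a v' w'
    intro b2 h2 b1 h1
    by_cases hb2 : a = b2
    · subst hb2
      have hX := takeUntil_start (Walk.cons r q) h2
      have h1' := h1
      rw [hX] at h1'
      have hb1 : b1 = a := (Walk.mem_support_nil_iff).mp h1'
      subst hb1
      rw [takeUntil_start, takeUntil_start]
    · have hq2 : b2 ∈ q.support := by
        have := h2
        rw [Walk.support_cons, List.mem_cons] at this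
        tauto
      have hXeq : (Walk.cons r q).takeUntil b2 h2 = Walk.cons r (q.takeUntil b2 hq2) :=
        takeUntil_cons_ne r q h2 hb2 hq2
      by_cases hb1 : a = b1
      · subst hb1
        rw [takeUntil_start, takeUntil_start]
      · have h1' : b1 ∈ (Walk.cons r (q.takeUntil b2 hq2)).support := hXeq ▸ h1
        have hq1 : b1 ∈ (q.takeUntil b2 hq2).support := by
          have := h1'
          rw [Walk.support_cons, List.mem_cons] at this
          tauto
        have hq1' : b1 ∈ q.support := q.support_takeUntil_subset hq2 hq1
        calc ((Walk.cons r q).takeUntil b2 h2).takeUntil b1 h1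
            = (Walk.cons r (q.takeUntil b2 hq2)).takeUntil b1 (hXeq ▸ h1) :=
              takeUntil_congr hXeq h1
          _ = Walk.cons r ((q.takeUntil b2 hq2).takeUntil b1 hq1) :=
              takeUntil_cons_ne _ _ _ hb1 hq1
          _ = Walk.cons r (q.takeUntil b1 hq1') :=
              congrArg _ (ih b2 hq2 b1 hq1)
          _ = (Walk.cons r q).takeUntil b1 (by simp [hq1']) :=
              (takeUntil_cons_ne r q (by simp [hq1']) hb1 hq1').symm

lemma mem_takeUntil_or [DecidableEq V] {v w : V} (p : G.Walk v w) :
    ∀ (b1 : V) (h1 : b1 ∈ p.support) (b2 : V) (h2 : b2 ∈ p.support),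
      b1 ∈ (p.takeUntil b2 h2).support ∨ b2 ∈ (p.takeUntil b1 h1).support := by
  induction p with
  | nil =>
    intro b1 h1 b2 h2
    left
    have hb1 : b1 = _ := (Walk.mem_support_nil_iff).mp h1
    subst hb1
    exact Walk.start_mem_support _
  | cons r q ih =>
    rename_i a v' w'
    intro b1 h1 b2 h2
    by_cases e1 : a = b1
    · subst e1
      left; exact Walk.start_mem_support _
    by_cases e2 : a = b2
    · subst e2
      right; exact Walk.start_mem_support _
    have hq1 : b1 ∈ q.support := by
      have := h1; rw [Walk.support_cons, List.mem_cons] at this; tauto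
    have hq2 : b2 ∈ q.support := by
      have := h2; rw [Walk.support_cons, List.mem_cons] at this; tauto
    cases ih b1 hq1 b2 hq2 with
    | inl h =>
      left
      rw [takeUntil_cons_ne r q h2 e2 hq2]
      simp [h]
    | inr h =>
      right
      rw [takeUntil_cons_ne r q h1 e1 hq1]
      simp [h]

lemma exists_oddCycle (ω : Sym2 V → ℕ) :
    ∀ (n : ℕ) {v : V} (w : G.Walk v v), w.length ≤ n → Odd (w.wt ω) →
    ∃ (u : V) (c : G.Walk u u), c.IsCycle ∧ Odd (c.wt ω) ∧ c.wt ω ≤ w.wt ω := by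
  classical
  intro n
  induction n with
  | zero =>
    intro v w hl hodd
    cases w with
    | nil => simp [wt_nil, Nat.odd_iff] at hodd
    | cons h p => simp at hl
  | succ n ih =>
    intro v w hl hodd
    by_cases hcyc : w.IsCycle
    · exact ⟨v, w, hcyc, hodd, le_rfl⟩
    cases w with
    | nil => simp [wt_nil, Nat.odd_iff] at hodd
    | cons h p =>
      rename_i u0
      rw [Walk.cons_isCycle_iff] at hcyc
      by_cases hpath : p.IsPath
      · have he : s(v, u0) ∈ p.edges := by tauto
        have hvu : v ≠ u0 := h.ne
        have hrev : ¬ p.reverse.Nil := by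
          rw [Walk.not_nil_iff_lt_length]
          simp only [Walk.length_reverse]
          cases p with
          | nil => exact absurd rfl hvu.symm
          | cons _ _ => simp
        obtain ⟨w1, hvw1, r2, hreq⟩ := Walk.not_nil_iff.mp hrev
        have hr : (Walk.cons hvw1 r2).IsPath := hreq ▸ hpath.reverse
        rw [Walk.cons_isPath_iff] at hr
        have he' : s(v, u0) ∈ (Walk.cons hvw1 r2).edges := by
          rw [← hreq, Walk.edges_reverse, List.mem_reverse]
          exact he
        rw [Walk.edges_cons, List.mem_cons] at he'
        have heq : s(v, u0) = s(v, w1) := by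
          cases he' with
          | inl h' => exact h'
          | inr h' => exact absurd (Walk.fst_mem_support_of_mem_edges r2 h') hr.2
        have hw1 : u0 = w1 := Sym2.congr_right.mp heq
        subst hw1
        have hr2 : r2 = Walk.nil := Walk.isPath_iff_eq_nil.mp hr.1
        subst hr2
        have hpeq : p = (Walk.cons hvw1 Walk.nil).reverse := by
          rw [← hreq, Walk.reverse_reverse]
        have hwt : p.wt ω = ω s(v, u0) := by
          rw [hpeq, wt_reverse, wt_cons, wt_nil]
          exact Nat.add_zero _
        rw [wt_cons, hwt, Nat.odd_iff] at hodd
        omega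
      · have hnodup : ¬p.support.Nodup := fun hn => hpath ((Walk.isPath_def p).mpr hn)
        obtain ⟨z, hz⟩ := List.exists_duplicate_iff_not_nodup.mpr hnodup
        have hzmem : z ∈ p.support := hz.mem
        have hcount : 2 ≤ p.support.count z := List.duplicate_iff_two_le_count.mp hz
        have hcount1 : (p.takeUntil z hzmem).support.count z = 1 :=
          p.count_support_takeUntil_eq_one hzmem
        have hsupp : p.support
            = (p.takeUntil z hzmem).support ++ (p.dropUntil z hzmem).support.tail := by
          rw [← Walk.support_append, p.take_spec hzmem]
        have htail : z ∈ (p.dropUntil z hzmem).support.tail := by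
          by_contra hcon
          rw [hsupp, List.count_append] at hcount
          rw [List.count_eq_zero_of_not_mem hcon] at hcount
          omega
        have hDnil : ¬ (p.dropUntil z hzmem).Nil := by
          intro hnil
          rw [Walk.nil_iff_support_eq] at hnil
          rw [hnil] at htail
          simp at htail
        obtain ⟨w0, hzw0, D', hDeq⟩ := Walk.not_nil_iff.mp hDnil
        have hz' : z ∈ D'.support := by
          rw [hDeq] at htail
          simpa using htail
        set A : G.Walk v v :=
          Walk.cons h ((p.takeUntil z hzmem).append (D'.dropUntil z hz')) with hA
        set B : G.Walk z z := Walk.cons hzw0 (D'.takeUntil z hz') with hB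
        have hwtp : p.wt ω = (p.takeUntil z hzmem).wt ω + (p.dropUntil z hzmem).wt ω := by
          rw [← wt_append, p.take_spec hzmem]
        have hD'wt : D'.wt ω = (D'.takeUntil z hz').wt ω + (D'.dropUntil z hz').wt ω := by
          rw [← wt_append, D'.take_spec hz']
        have hwtD : (p.dropUntil z hzmem).wt ω
            = ω s(z, w0) + (D'.takeUntil z hz').wt ω + (D'.dropUntil z hz').wt ω := by
          rw [hDeq, wt_cons, hD'wt]
          ring
        have hsum : A.wt ω + B.wt ω = (Walk.cons h p).wt ω := by
          rw [hA, hB, wt_cons, wt_cons, wt_cons, wt_append, hwtp, hwtD]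
          ring
        have hlp : p.length = (p.takeUntil z hzmem).length + (p.dropUntil z hzmem).length := by
          rw [← Walk.length_append, p.take_spec hzmem]
        have hlD : (p.dropUntil z hzmem).length = D'.length + 1 := by
          rw [hDeq, Walk.length_cons]
        have hlD' : D'.length = (D'.takeUntil z hz').length + (D'.dropUntil z hz').length := by
          rw [← Walk.length_append, D'.take_spec hz']
        have hlenw : p.length + 1 ≤ n + 1 := by
          simpa [Walk.length_cons] using hl
        have hlA : A.length ≤ n := by
          rw [hA, Walk.length_cons, Walk.length_append]
          omega
        have hlB : B.length ≤ n := by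
          rw [hB, Walk.length_cons]
          omega
        have hor : Odd (A.wt ω) ∨ Odd (B.wt ω) := by
          rw [Nat.odd_iff] at hodd
          rw [Nat.odd_iff, Nat.odd_iff]
          omega
        cases hor with
        | inl hoA =>
          obtain ⟨u, c, hc, hco, hcle⟩ := ih A hlA hoA
          exact ⟨u, c, hc, hco, hcle.trans (by omega)⟩
        | inr hoB =>
          obtain ⟨u, c, hc, hco, hcle⟩ := ih B hlB hoB
          exact ⟨u, c, hc, hco, hcle.trans (by omega)⟩

end StmtAux

open StmtAux in
/-- Let `i ≥ 1` and `k ≥ 10i + 15`. Let `H` be a weighted graph with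
weights in `{3,4,5}` and no cycle of odd total weight smaller than `2k+1`. If `P` is a
path of minimal weight between its end-vertices, then `N^i[P]` is weighted bipartite. -/
theorem stmt7 {V : Type*} (i k : ℕ) (hi : 1 ≤ i) (hk : 10 * i + 15 ≤ k)
    (H : SimpleGraph V) (ω : Sym2 V → ℕ)
    (hω : ∀ e ∈ H.edgeSet, ω e = 3 ∨ ω e = 4 ∨ ω e = 5)
    (hfree : ∀ (v : V) (c : H.Walk v v), c.IsCycle → Odd (c.wt ω) → 2 * k + 1 ≤ c.wt ω)
    (x y : V) (P : H.Walk x y) (hP : P.IsPath)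
    (hmin : ∀ Q : H.Walk x y, Q.IsPath → P.wt ω ≤ Q.wt ω) :
    weightedBipartiteOn H ω (closedNbhd H i {z | z ∈ P.support}) := by
  classical
  -- selection of a nearby path vertex for each vertex of the neighbourhood
  have hsel : ∀ v : V, v ∈ closedNbhd H i {z | z ∈ P.support} →
      ∃ b, b ∈ P.support ∧ ∃ q : H.Walk b v, q.wt ω ≤ 5 * i := by
    intro v hv
    obtain ⟨b, hb, q, hql⟩ := hv
    exact ⟨b, hb, q, le_trans (wt_le_five ω hω q) (Nat.mul_le_mul_left 5 hql)⟩
  choose bb hbP qq hqw using hsel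
  -- the key "segment versus detour" parity lemma
  have core : ∀ (b1 : V) (h1 : b1 ∈ P.support) (b2 : V) (h2 : b2 ∈ P.support)
      (hc : b1 ∈ (P.takeUntil b2 h2).support) (R : H.Walk b1 b2),
      R.wt ω ≤ 10 * i + 5 →
      ((P.takeUntil b1 h1).wt ω + (P.takeUntil b2 h2).wt ω + R.wt ω) % 2 = 0 := by
    intro b1 h1 b2 h2 hc R hRwt
    have htt : (P.takeUntil b2 h2).takeUntil b1 hc = P.takeUntil b1 h1 :=
      takeUntil_takeUntil P b2 h2 b1 hc
    have hsplit : (P.takeUntil b1 h1).wt ω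
        + ((P.takeUntil b2 h2).dropUntil b1 hc).wt ω = (P.takeUntil b2 h2).wt ω := by
      rw [← htt, ← wt_append, (P.takeUntil b2 h2).take_spec hc]
    have hPsplit : P.wt ω = (P.takeUntil b2 h2).wt ω + (P.dropUntil b2 h2).wt ω := by
      rw [← wt_append, P.take_spec h2]
    have hWwt : ((P.takeUntil b1 h1).append (R.append (P.dropUntil b2 h2))).wt ω
        = (P.takeUntil b1 h1).wt ω + R.wt ω + (P.dropUntil b2 h2).wt ω := by
      rw [wt_append, wt_append]
      ring
    have hminw : P.wt ω ≤ ((P.takeUntil b1 h1).append (R.append (P.dropUntil b2 h2))).wt ω :=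
      le_trans (hmin _ (Walk.bypass_isPath _)) (wt_bypass_le ω _)
    have hSegR : ((P.takeUntil b2 h2).dropUntil b1 hc).wt ω ≤ R.wt ω := by omega
    have hC0wt : (((P.takeUntil b2 h2).dropUntil b1 hc).append R.reverse).wt ω
        = ((P.takeUntil b2 h2).dropUntil b1 hc).wt ω + R.wt ω := by
      rw [wt_append, wt_reverse]
    have heven : (((P.takeUntil b2 h2).dropUntil b1 hc).append R.reverse).wt ω % 2 = 0 := by
      by_contra hoddc
      have hodd' : Odd ((((P.takeUntil b2 h2).dropUntil b1 hc).append R.reverse).wt ω) :=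
        Nat.odd_iff.mpr (by omega)
      obtain ⟨u, c0, hc0cyc, hc0odd, hc0le⟩ :=
        exists_oddCycle ω _ _ le_rfl hodd'
      have := hfree u c0 hc0cyc hc0odd
      omega
    omega
  -- parity relation across an edge of the neighbourhood
  have key : ∀ (u w : V) (hu : u ∈ closedNbhd H i {z | z ∈ P.support})
      (hw : w ∈ closedNbhd H i {z | z ∈ P.support}), H.Adj u w →
      ((P.takeUntil (bb u hu) (hbP u hu)).wt ω + (qq u hu).wt ω
        + ((P.takeUntil (bb w hw) (hbP w hw)).wt ω + (qq w hw).wt ω)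
        + ω s(u, w)) % 2 = 0 := by
    intro u w hu hw huw
    have hRwt : ((qq u hu).append (Walk.cons huw (qq w hw).reverse)).wt ω
        = (qq u hu).wt ω + (ω s(u, w) + (qq w hw).wt ω) := by
      rw [wt_append, wt_cons, wt_reverse]
    have hedge : ω s(u, w) ≤ 5 := by
      rcases hω s(u, w) (H.mem_edgeSet.mpr huw) with h | h | h <;> omega
    have hb : ((qq u hu).append (Walk.cons huw (qq w hw).reverse)).wt ω ≤ 10 * i + 5 := by
      have h1 := hqw u hu
      have h2 := hqw w hw
      omega
    rcases mem_takeUntil_or P (bb u hu) (hbP u hu) (bb w hw) (hbP w hw) with hcse | hcse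
    · have := core (bb u hu) (hbP u hu) (bb w hw) (hbP w hw) hcse
        ((qq u hu).append (Walk.cons huw (qq w hw).reverse)) hb
      omega
    · have hbrev : (((qq u hu).append (Walk.cons huw (qq w hw).reverse)).reverse).wt ω
          ≤ 10 * i + 5 := by
        rw [wt_reverse]; exact hb
      have := core (bb w hw) (hbP w hw) (bb u hu) (hbP u hu) hcse
        (((qq u hu).append (Walk.cons huw (qq w hw).reverse)).reverse) hbrev
      rw [wt_reverse] at this
      omega
  -- the parity potential
  set fN : V → ℕ := fun u =>
    if h : u ∈ closedNbhd H i {z | z ∈ P.support} then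
      (P.takeUntil (bb u h) (hbP u h)).wt ω + (qq u h).wt ω
    else 0 with hfN
  have hfNval : ∀ (u : V) (h : u ∈ closedNbhd H i {z | z ∈ P.support}),
      fN u = (P.takeUntil (bb u h) (hbP u h)).wt ω + (qq u h).wt ω := by
    intro u h
    rw [hfN]
    simp only [dif_pos h]
  -- telescoping along any walk inside the neighbourhood
  have tele : ∀ (a b : V) (q : H.Walk a b),
      (∀ x ∈ q.support, x ∈ closedNbhd H i {z | z ∈ P.support}) →
      (q.wt ω + fN a + fN b) % 2 = 0 := by
    intro a b q
    induction q with
    | nil =>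
      intro _
      rw [wt_nil]
      omega
    | cons h p ih =>
      rename_i a' m b'
      intro hs
      have ha : a' ∈ closedNbhd H i {z | z ∈ P.support} :=
        hs _ (Walk.start_mem_support _)
      have hm : m ∈ closedNbhd H i {z | z ∈ P.support} := by
        apply hs
        rw [Walk.support_cons]
        exact List.mem_cons_of_mem _ (Walk.start_mem_support _)
      have hp : ∀ x ∈ p.support, x ∈ closedNbhd H i {z | z ∈ P.support} := by
        intro x' hx'
        apply hs
        rw [Walk.support_cons]
        exact List.mem_cons_of_mem _ hx'
      have h1 := key a' m ha hm h
      have h2 := ih hp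
      rw [wt_cons]
      rw [hfNval a' ha] at *
      rw [hfNval m hm] at h2
      omega
  -- conclude
  intro v c hcyc hsupp
  have := tele v v c hsupp
  intro hoddc
  rw [Nat.odd_iff] at hoddc
  omega
end

section
/- Let i ≥ 1 be an integer and let H be a weighted graph. Let B₁, B₂ and P be sets of vertices of H such that the (unweighted) graph distance between B₁ and B₂ is at least 2i+2 and P induces a connected subgraph. If both N^i[B₁ ∪ P] and N^i[B₂ ∪ P] induce weighted bipartite subgraphs of H, then N^i[B₁ ∪ B₂ ∪ P] induces a weighted bipartite subgraph of H. -/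
open SimpleGraph

namespace Stmt8Aux

variable {V : Type*} {G : SimpleGraph V}

lemma wt_nil (ω : Sym2 V → ℕ) {u : V} : (SimpleGraph.Walk.nil : G.Walk u u).wt ω = 0 := rfl

lemma wt_cons (ω : Sym2 V → ℕ) {u v w : V} (h : G.Adj u v) (p : G.Walk v w) :
    (SimpleGraph.Walk.cons h p).wt ω = ω s(u, v) + p.wt ω := by
  simp [SimpleGraph.Walk.wt]

lemma wt_append (ω : Sym2 V → ℕ) {u v w : V} (p : G.Walk u v) (q : G.Walk v w) :
    (p.append q).wt ω = p.wt ω + q.wt ω := by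
  simp [SimpleGraph.Walk.wt, SimpleGraph.Walk.edges_append]

lemma wt_reverse (ω : Sym2 V → ℕ) {u v : V} (p : G.Walk u v) :
    p.reverse.wt ω = p.wt ω := by
  simp [SimpleGraph.Walk.wt, SimpleGraph.Walk.edges_reverse, List.sum_reverse]

lemma wt_eq_zero_of_length_eq_zero (ω : Sym2 V → ℕ) {u v : V} (p : G.Walk u v)
    (h : p.length = 0) : p.wt ω = 0 := by
  have : p.edges = [] := List.length_eq_zero_iff.mp (by rw [SimpleGraph.Walk.length_edges]; exact h)
  simp [SimpleGraph.Walk.wt, this]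

/-- In a path from `x` to `v`, if the edge `{v,x}` occurs, the path has length 1. -/
lemma length_eq_one_of_edge_mem {x v : V} (p : G.Walk x v) (hp : p.IsPath)
    (he : s(v, x) ∈ p.edges) : p.length = 1 := by
  induction p with
  | nil => simp at he
  | @cons x y w h q ih =>
    rw [SimpleGraph.Walk.edges_cons, List.mem_cons] at he
    have hcons := (SimpleGraph.Walk.cons_isPath_iff h q).mp hp
    rcases he with he | he
    · rw [Sym2.eq_iff] at he
      rcases he with ⟨hvx, _⟩ | ⟨hvy, _⟩
      · exact absurd (hvx ▸ q.end_mem_support) hcons.2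
      · subst hvy
        have := (SimpleGraph.Walk.isPath_iff_eq_nil (p := q)).mp hcons.1
        subst this
        simp
    · exact absurd (q.snd_mem_support_of_mem_edges he) hcons.2

end Stmt8Aux

namespace Stmt8Aux
open SimpleGraph.Walk
variable {V : Type*} {G : SimpleGraph V}

lemma evenClosed {B : Set V} (ω : Sym2 V → ℕ) (hB : weightedBipartiteOn G ω B) :
    ∀ (n : ℕ) {v : V} (w : G.Walk v v), w.length ≤ n →
      (∀ x ∈ w.support, x ∈ B) → Even (w.wt ω) := by
  classical
  intro n
  induction n with
  | zero =>
    intro v w hlen _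
    rw [wt_eq_zero_of_length_eq_zero ω w (Nat.le_zero.mp hlen)]
    exact Even.zero
  | succ n ih =>
    intro v w hlen hsup
    by_cases hnd : w.support.tail.Nodup
    · cases w with
      | nil => simp [wt_nil]
      | @cons _ x _ h p =>
        have hp : p.IsPath := by
          rw [SimpleGraph.Walk.isPath_def]
          simpa using hnd
        by_cases he : s(v, x) ∈ p.edges
        · have hl : p.length = 1 := length_eq_one_of_edge_mem p hp he
          have hel : p.edges.length = 1 := by rw [SimpleGraph.Walk.length_edges]; exact hl
          obtain ⟨a, ha⟩ := List.length_eq_one_iff.mp hel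
          rw [ha, List.mem_singleton] at he
          rw [wt_cons]
          have hpw : p.wt ω = ω s(v, x) := by
            rw [SimpleGraph.Walk.wt, ha, ← he]; simp
          rw [hpw]
          exact ⟨ω s(v, x), by ring⟩
        · have hc : (SimpleGraph.Walk.cons h p).IsCycle :=
            (SimpleGraph.Walk.cons_isCycle_iff p h).mpr ⟨hp, he⟩
          exact Nat.not_odd_iff_even.mp (hB _ hc hsup)
    · obtain ⟨u, hdup⟩ := List.exists_duplicate_iff_not_nodup.mpr hnd
      have hcnt2 : 2 ≤ w.support.tail.count u := List.duplicate_iff_two_le_count.mp hdup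
      have hcnt2' : 2 ≤ w.support.count u :=
        le_trans hcnt2 (List.Sublist.count_le u (List.tail_sublist _))
      have hu : u ∈ w.support := List.count_pos_iff.mp (by omega)
      have hspec := w.take_spec hu
      have hcq₁ : (w.takeUntil u hu).support.count u = 1 := w.count_support_takeUntil_eq_one hu
      cases hd : w.dropUntil u hu with
      | nil =>
        rw [hd] at hspec
        have hsup_eq := congrArg SimpleGraph.Walk.support hspec
        rw [SimpleGraph.Walk.support_append] at hsup_eq
        simp only [SimpleGraph.Walk.support_nil, List.tail_cons, List.append_nil] at hsup_eq
        rw [← hsup_eq] at hcnt2'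
        omega
      | @cons _ x₀ _ h' q₃ =>
        rw [hd] at hspec
        have hws := congrArg SimpleGraph.Walk.support hspec
        rw [SimpleGraph.Walk.support_append, SimpleGraph.Walk.support_cons,
          List.tail_cons] at hws
        -- hws : (w.takeUntil u hu).support ++ q₃.support = w.support
        have hcnt3 : 1 ≤ q₃.support.count u := by
          rw [← hws, List.count_append] at hcnt2'
          omega
        have hu₃ : u ∈ q₃.support := List.count_pos_iff.mp (by omega)
        have hspec₃ := q₃.take_spec hu₃
        set q₁ := w.takeUntil u hu with hq₁def
        set r := q₃.takeUntil u hu₃ with hrdef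
        set s := q₃.dropUntil u hu₃ with hsdef
        have hlenw := congrArg SimpleGraph.Walk.length hspec
        rw [SimpleGraph.Walk.length_append, SimpleGraph.Walk.length_cons] at hlenw
        have hlen₃ := congrArg SimpleGraph.Walk.length hspec₃
        rw [SimpleGraph.Walk.length_append] at hlen₃
        have hwtw := congrArg (SimpleGraph.Walk.wt ω) hspec
        rw [wt_append, wt_cons] at hwtw
        have hwt₃ := congrArg (SimpleGraph.Walk.wt ω) hspec₃
        rw [wt_append] at hwt₃
        -- positivity
        have hpos : 1 ≤ q₁.length + s.length := by
          by_contra hcon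
          push_neg at hcon
          have hq₁0 : q₁.length = 0 := by omega
          have hs0 : s.length = 0 := by omega
          have hq₁sup : q₁.support = [u] := by
            obtain ⟨a, ha⟩ := List.length_eq_one_iff.mp
              (by rw [SimpleGraph.Walk.length_support, hq₁0])
            have : u ∈ q₁.support := q₁.end_mem_support
            rw [ha] at this ⊢
            simp_all
          have hssup : s.support = [u] := by
            obtain ⟨a, ha⟩ := List.length_eq_one_iff.mp
              (by rw [SimpleGraph.Walk.length_support, hs0])
            have : u ∈ s.support := s.start_mem_support
            rw [ha] at this ⊢
            simp_all
          have hq3sup := congrArg SimpleGraph.Walk.support hspec₃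
          rw [SimpleGraph.Walk.support_append, hssup] at hq3sup
          simp only [List.tail_cons, List.append_nil] at hq3sup
          -- hq3sup : r.support = q₃.support
          have hq₃s : q₃.support.count u = 1 := by
            rw [← hq3sup]
            exact q₃.count_support_takeUntil_eq_one hu₃
          have htail : w.support.tail.count u = 1 := by
            rw [← hws, hq₁sup]
            simpa using hq₃s
          omega
        -- supports in B
        have hsupsub : ∀ y, y ∈ q₃.support → y ∈ w.support := by
          intro y hy; rw [← hws]; exact List.mem_append_right _ hy
        have hsupI : ∀ y ∈ (SimpleGraph.Walk.cons h' r).support, y ∈ B := by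
          intro y hy
          rw [SimpleGraph.Walk.support_cons, List.mem_cons] at hy
          rcases hy with rfl | hy
          · exact hsup _ hu
          · exact hsup _ (hsupsub _ (q₃.support_takeUntil_subset hu₃ hy))
        have hsupO : ∀ y ∈ (q₁.append s).support, y ∈ B := by
          intro y hy
          rw [SimpleGraph.Walk.mem_support_append_iff] at hy
          rcases hy with hy | hy
          · exact hsup _ (w.support_takeUntil_subset hu hy)
          · exact hsup _ (hsupsub _ (q₃.support_dropUntil_subset hu₃ hy))
        have eI : Even ((SimpleGraph.Walk.cons h' r).wt ω) := by
          apply ih _ _ hsupI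
          rw [SimpleGraph.Walk.length_cons]
          omega
        have eO : Even ((q₁.append s).wt ω) := by
          apply ih _ _ hsupO
          rw [SimpleGraph.Walk.length_append]
          omega
        have : w.wt ω = (SimpleGraph.Walk.cons h' r).wt ω + (q₁.append s).wt ω := by
          rw [wt_cons, wt_append]
          omega
        rw [this]
        exact eI.add eO

end Stmt8Aux

namespace Stmt8Aux
open SimpleGraph.Walk
variable {V : Type*} {G : SimpleGraph V}

lemma wd00 (ω : Sym2 V → ℕ) {T₁ : Set V}
    (hE₁ : ∀ {v : V} (w : G.Walk v v), (∀ x ∈ w.support, x ∈ T₁) → Even (w.wt ω))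
    {p₀ x : V} (w₁ w₂ : G.Walk p₀ x)
    (h₁ : ∀ a ∈ w₁.support, a ∈ T₁) (h₂ : ∀ a ∈ w₂.support, a ∈ T₁) :
    Even (w₁.wt ω + w₂.wt ω) := by
  have h := hE₁ (w₁.append w₂.reverse) ?_
  · rwa [wt_append, wt_reverse] at h
  · intro a ha
    rw [SimpleGraph.Walk.mem_support_append_iff] at ha
    rcases ha with ha | ha
    · exact h₁ a ha
    · rw [SimpleGraph.Walk.support_reverse, List.mem_reverse] at ha
      exact h₂ a ha

lemma wd (ω : Sym2 V → ℕ) {T₁ T₂ : Set V} {p₀ : V}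
    (hE₁ : ∀ {v : V} (w : G.Walk v v), (∀ x ∈ w.support, x ∈ T₁) → Even (w.wt ω))
    (hE₂ : ∀ {v : V} (w : G.Walk v v), (∀ x ∈ w.support, x ∈ T₂) → Even (w.wt ω))
    (hM : ∀ x : V, x ∈ T₁ → x ∈ T₂ → ∃ w : G.Walk p₀ x, ∀ a ∈ w.support, a ∈ T₁ ∧ a ∈ T₂)
    {x : V} (w₁ w₂ : G.Walk p₀ x)
    (g₁ : (∀ a ∈ w₁.support, a ∈ T₁) ∨ (∀ a ∈ w₁.support, a ∈ T₂))
    (g₂ : (∀ a ∈ w₂.support, a ∈ T₁) ∨ (∀ a ∈ w₂.support, a ∈ T₂)) :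
    Even (w₁.wt ω + w₂.wt ω) := by
  have mixed : ∀ (u₁ u₂ : G.Walk p₀ x), (∀ a ∈ u₁.support, a ∈ T₁) →
      (∀ a ∈ u₂.support, a ∈ T₂) → Even (u₁.wt ω + u₂.wt ω) := by
    intro u₁ u₂ hu₁ hu₂
    obtain ⟨wc, hwc⟩ := hM x (hu₁ x u₁.end_mem_support) (hu₂ x u₂.end_mem_support)
    have e₁ := wd00 ω hE₁ u₁ wc hu₁ (fun a ha => (hwc a ha).1)
    have e₂ := wd00 ω hE₂ wc u₂ (fun a ha => (hwc a ha).2) hu₂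
    rw [Nat.even_add] at e₁ e₂ ⊢
    tauto
  rcases g₁ with g₁ | g₁ <;> rcases g₂ with g₂ | g₂
  · exact wd00 ω hE₁ w₁ w₂ g₁ g₂
  · exact mixed w₁ w₂ g₁ g₂
  · have := mixed w₂ w₁ g₂ g₁
    rwa [Nat.add_comm] at this
  · exact wd00 ω hE₂ w₁ w₂ g₁ g₂

lemma step (ω : Sym2 V → ℕ) {T₁ T₂ : Set V} {p₀ : V}
    (hE₁ : ∀ {v : V} (w : G.Walk v v), (∀ x ∈ w.support, x ∈ T₁) → Even (w.wt ω))
    (hE₂ : ∀ {v : V} (w : G.Walk v v), (∀ x ∈ w.support, x ∈ T₂) → Even (w.wt ω))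
    (hA12 : ∀ {x y : V}, G.Adj x y → x ∈ T₁ → x ∉ T₂ → y ∈ T₂ → y ∈ T₁)
    (hA21 : ∀ {x y : V}, G.Adj x y → x ∈ T₂ → x ∉ T₁ → y ∈ T₁ → y ∈ T₂)
    (hM : ∀ x : V, x ∈ T₁ → x ∈ T₂ → ∃ w : G.Walk p₀ x, ∀ a ∈ w.support, a ∈ T₁ ∧ a ∈ T₂)
    {x y : V} (hxy : G.Adj x y) (hyT : y ∈ T₁ ∪ T₂) (wx : G.Walk p₀ x)
    (hwx : (∀ a ∈ wx.support, a ∈ T₁) ∨ (∀ a ∈ wx.support, a ∈ T₂)) :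
    ∃ wy : G.Walk p₀ y, ((∀ a ∈ wy.support, a ∈ T₁) ∨ (∀ a ∈ wy.support, a ∈ T₂)) ∧
      Even (wy.wt ω + wx.wt ω + ω s(x, y)) := by
  have ext1 : ∀ (w : G.Walk p₀ x) (T : Set V), (∀ a ∈ w.support, a ∈ T) → y ∈ T →
      ∀ a ∈ (w.append (SimpleGraph.Walk.cons hxy SimpleGraph.Walk.nil)).support, a ∈ T := by
    intro w T hw hy a ha
    rw [SimpleGraph.Walk.mem_support_append_iff] at ha
    rcases ha with ha | ha
    · exact hw a ha
    · have hax : a = x ∨ a = y := by simpa using ha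
      rcases hax with rfl | rfl
      · exact hw a w.end_mem_support
      · exact hy
  have wtext : ∀ (w : G.Walk p₀ x),
      (w.append (SimpleGraph.Walk.cons hxy SimpleGraph.Walk.nil)).wt ω = w.wt ω + ω s(x, y) := by
    intro w
    rw [wt_append, wt_cons, wt_nil]
    omega
  rcases hwx with hwx | hwx
  · by_cases hy1 : y ∈ T₁
    · refine ⟨wx.append (SimpleGraph.Walk.cons hxy SimpleGraph.Walk.nil),
        Or.inl (ext1 wx T₁ hwx hy1), ?_⟩
      rw [wtext]
      exact ⟨wx.wt ω + ω s(x, y), by omega⟩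
    · have hy2 : y ∈ T₂ := hyT.resolve_left hy1
      have hx1 : x ∈ T₁ := hwx x wx.end_mem_support
      have hx2 : x ∈ T₂ := by
        by_contra hx2
        exact hy1 (hA12 hxy hx1 hx2 hy2)
      obtain ⟨wc, hwc⟩ := hM x hx1 hx2
      refine ⟨wc.append (SimpleGraph.Walk.cons hxy SimpleGraph.Walk.nil),
        Or.inr (ext1 wc T₂ (fun a ha => (hwc a ha).2) hy2), ?_⟩
      rw [wtext]
      have := wd00 ω hE₁ wc wx (fun a ha => (hwc a ha).1) hwx
      obtain ⟨k, hk⟩ := this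
      exact ⟨k + ω s(x, y), by omega⟩
  · by_cases hy2 : y ∈ T₂
    · refine ⟨wx.append (SimpleGraph.Walk.cons hxy SimpleGraph.Walk.nil),
        Or.inr (ext1 wx T₂ hwx hy2), ?_⟩
      rw [wtext]
      exact ⟨wx.wt ω + ω s(x, y), by omega⟩
    · have hy1 : y ∈ T₁ := hyT.resolve_right hy2
      have hx2 : x ∈ T₂ := hwx x wx.end_mem_support
      have hx1 : x ∈ T₁ := by
        by_contra hx1
        exact hy2 (hA21 hxy hx2 hx1 hy1)
      obtain ⟨wc, hwc⟩ := hM x hx1 hx2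
      refine ⟨wc.append (SimpleGraph.Walk.cons hxy SimpleGraph.Walk.nil),
        Or.inl (ext1 wc T₁ (fun a ha => (hwc a ha).1) hy1), ?_⟩
      rw [wtext]
      have := wd00 ω hE₂ wc wx (fun a ha => (hwc a ha).2) hwx
      obtain ⟨k, hk⟩ := this
      exact ⟨k + ω s(x, y), by omega⟩

lemma coreA (ω : Sym2 V → ℕ) {T₁ T₂ : Set V} {p₀ : V}
    (hE₁ : ∀ {v : V} (w : G.Walk v v), (∀ x ∈ w.support, x ∈ T₁) → Even (w.wt ω))
    (hE₂ : ∀ {v : V} (w : G.Walk v v), (∀ x ∈ w.support, x ∈ T₂) → Even (w.wt ω))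
    (hA12 : ∀ {x y : V}, G.Adj x y → x ∈ T₁ → x ∉ T₂ → y ∈ T₂ → y ∈ T₁)
    (hA21 : ∀ {x y : V}, G.Adj x y → x ∈ T₂ → x ∉ T₁ → y ∈ T₁ → y ∈ T₂)
    (hM : ∀ x : V, x ∈ T₁ → x ∈ T₂ → ∃ w : G.Walk p₀ x, ∀ a ∈ w.support, a ∈ T₁ ∧ a ∈ T₂)
    {x y : V} (w : G.Walk x y) (hs : ∀ a ∈ w.support, a ∈ T₁ ∪ T₂)
    (wx : G.Walk p₀ x)
    (hwx : (∀ a ∈ wx.support, a ∈ T₁) ∨ (∀ a ∈ wx.support, a ∈ T₂)) :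
    ∃ wy : G.Walk p₀ y, ((∀ a ∈ wy.support, a ∈ T₁) ∨ (∀ a ∈ wy.support, a ∈ T₂)) ∧
      Even (w.wt ω + wx.wt ω + wy.wt ω) := by
  induction w with
  | nil => exact ⟨wx, hwx, ⟨wx.wt ω, by rw [wt_nil]; omega⟩⟩
  | @cons x x' y hxy w' ih =>
    have hx' : x' ∈ T₁ ∪ T₂ := hs x' (by simp)
    obtain ⟨wx', hwx', hstep⟩ := step ω hE₁ hE₂ hA12 hA21 hM hxy hx' wx hwx
    obtain ⟨wy, hwy, heven⟩ := ih (fun a ha => hs a (by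
      rw [SimpleGraph.Walk.support_cons]; exact List.mem_cons_of_mem _ ha)) wx' hwx'
    refine ⟨wy, hwy, ?_⟩
    rw [wt_cons]
    obtain ⟨k1, hk1⟩ := hstep
    obtain ⟨k2, hk2⟩ := heven
    exact ⟨k1 + k2 - wx'.wt ω, by omega⟩

lemma findMid {T₁ T₂ : Set V}
    (hA : ∀ {x y : V}, G.Adj x y → x ∈ T₁ → x ∉ T₂ → y ∈ T₂ → y ∈ T₁) :
    ∀ {x y : V} (q : G.Walk x y), (∀ a ∈ q.support, a ∈ T₁ ∪ T₂) →
      x ∉ T₂ → y ∈ T₂ → ∃ m ∈ q.support, m ∈ T₁ ∧ m ∈ T₂ := by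
  intro x y q
  induction q with
  | nil => intro _ hx hy; exact absurd hy hx
  | @cons x x' y hxy q' ih =>
    intro hs hx hy
    by_cases hx' : x' ∈ T₂
    · have hx1 : x ∈ T₁ := (hs x (by simp)).resolve_right hx
      have hm1 : x' ∈ T₁ := hA hxy hx1 hx hx'
      exact ⟨x', by simp, hm1, hx'⟩
    · obtain ⟨m, hm, hm2⟩ := ih (fun a ha => hs a (by
        rw [SimpleGraph.Walk.support_cons]; exact List.mem_cons_of_mem _ ha)) hx' hy
      exact ⟨m, by rw [SimpleGraph.Walk.support_cons]; exact List.mem_cons_of_mem _ hm, hm2⟩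

lemma mem_closedNbhd_of_mem {i : ℕ} {X : Set V} {b : V} (hb : b ∈ X) :
    b ∈ closedNbhd G i X :=
  ⟨b, hb, SimpleGraph.Walk.nil, by simp⟩

lemma closedNbhd_union (i : ℕ) (X Y : Set V) :
    closedNbhd G i (X ∪ Y) = closedNbhd G i X ∪ closedNbhd G i Y := by
  ext x
  constructor
  · rintro ⟨b, hb | hb, w, hw⟩
    · exact Or.inl ⟨b, hb, w, hw⟩
    · exact Or.inr ⟨b, hb, w, hw⟩
  · rintro (⟨b, hb, w, hw⟩ | ⟨b, hb, w, hw⟩)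
    · exact ⟨b, Or.inl hb, w, hw⟩
    · exact ⟨b, Or.inr hb, w, hw⟩

lemma support_subset_closedNbhd [DecidableEq V] {i : ℕ} {X : Set V} {b x : V} (hb : b ∈ X)
    (w : G.Walk b x) (hlen : w.length ≤ i) :
    ∀ a ∈ w.support, a ∈ closedNbhd G i X :=
  fun a ha => ⟨b, hb, w.takeUntil a ha, le_trans (w.length_takeUntil_le ha) hlen⟩

end Stmt8Aux

open Stmt8Aux

/-- Let `i ≥ 1` and let `H` be a weighted graph. Let `B₁, B₂, P` be vertex
sets such that `d(B₁,B₂) ≥ 2i+2` and `P` induces a connected subgraph. If `N^i[B₁ ∪ P]` and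
`N^i[B₂ ∪ P]` are weighted bipartite, then so is `N^i[B₁ ∪ B₂ ∪ P]`. -/
theorem stmt8 {V : Type*} (i : ℕ) (hi : 1 ≤ i)
    (H : SimpleGraph V) (ω : Sym2 V → ℕ) (B₁ B₂ P : Set V)
    (hdist : ∀ b₁ ∈ B₁, ∀ b₂ ∈ B₂, ∀ w : H.Walk b₁ b₂, 2 * i + 2 ≤ w.length)
    (hP : (H.induce P).Connected)
    (h1 : weightedBipartiteOn H ω (closedNbhd H i (B₁ ∪ P)))
    (h2 : weightedBipartiteOn H ω (closedNbhd H i (B₂ ∪ P))) :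
    weightedBipartiteOn H ω (closedNbhd H i (B₁ ∪ B₂ ∪ P)) := by
  classical
  obtain ⟨p₀'⟩ := hP.nonempty
  set p₀ := (p₀' : V) with hp₀def
  have hp₀ : p₀ ∈ P := p₀'.2
  set T₁ := closedNbhd H i (B₁ ∪ P) with hT₁def
  set T₂ := closedNbhd H i (B₂ ∪ P) with hT₂def
  -- distance consequences
  have hd1 : ∀ x y : V, x ∈ closedNbhd H i B₁ → y ∈ closedNbhd H i B₂ → ¬ H.Adj x y := by
    rintro x y ⟨b₁, hb₁, w₁, hw₁⟩ ⟨b₂, hb₂, w₂, hw₂⟩ hadj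
    have := hdist b₁ hb₁ b₂ hb₂
      (w₁.append ((SimpleGraph.Walk.cons hadj SimpleGraph.Walk.nil).append w₂.reverse))
    rw [SimpleGraph.Walk.length_append, SimpleGraph.Walk.length_append,
      SimpleGraph.Walk.length_cons, SimpleGraph.Walk.length_nil,
      SimpleGraph.Walk.length_reverse] at this
    omega
  have hd0 : ∀ x : V, x ∈ closedNbhd H i B₁ → x ∈ closedNbhd H i B₂ → False := by
    rintro x ⟨b₁, hb₁, w₁, hw₁⟩ ⟨b₂, hb₂, w₂, hw₂⟩
    have := hdist b₁ hb₁ b₂ hb₂ (w₁.append w₂.reverse)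
    rw [SimpleGraph.Walk.length_append, SimpleGraph.Walk.length_reverse] at this
    omega
  have hT₁eq : T₁ = closedNbhd H i B₁ ∪ closedNbhd H i P := closedNbhd_union i B₁ P
  have hT₂eq : T₂ = closedNbhd H i B₂ ∪ closedNbhd H i P := closedNbhd_union i B₂ P
  have hPT₁ : closedNbhd H i P ⊆ T₁ := by rw [hT₁eq]; exact Set.subset_union_right
  have hPT₂ : closedNbhd H i P ⊆ T₂ := by rw [hT₂eq]; exact Set.subset_union_right
  -- intersection lands in N^i[P]
  have hMem : ∀ x : V, x ∈ T₁ → x ∈ T₂ → x ∈ closedNbhd H i P := by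
    intro x hx1 hx2
    rw [hT₁eq] at hx1
    rw [hT₂eq] at hx2
    rcases hx1 with hx1 | hx1
    · rcases hx2 with hx2 | hx2
      · exact absurd hx2 (fun h => hd0 x hx1 h)
      · exact hx2
    · exact hx1
  -- no edges between the two "far" parts
  have hA12 : ∀ {x y : V}, H.Adj x y → x ∈ T₁ → x ∉ T₂ → y ∈ T₂ → y ∈ T₁ := by
    intro x y hadj hx1 hx2 hy2
    have hxB₁ : x ∈ closedNbhd H i B₁ := by
      rw [hT₁eq] at hx1
      rcases hx1 with hx1 | hx1
      · exact hx1
      · exact absurd (hPT₂ hx1) hx2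
    rw [hT₂eq] at hy2
    rcases hy2 with hy2 | hy2
    · exact absurd hadj (hd1 x y hxB₁ hy2)
    · exact hPT₁ hy2
  have hA21 : ∀ {x y : V}, H.Adj x y → x ∈ T₂ → x ∉ T₁ → y ∈ T₁ → y ∈ T₂ := by
    intro x y hadj hx2 hx1 hy1
    have hxB₂ : x ∈ closedNbhd H i B₂ := by
      rw [hT₂eq] at hx2
      rcases hx2 with hx2 | hx2
      · exact hx2
      · exact absurd (hPT₁ hx2) hx1
    rw [hT₁eq] at hy1
    rcases hy1 with hy1 | hy1
    · exact absurd hadj.symm (hd1 y x hy1 hxB₂)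
    · exact hPT₂ hy1
  -- canonical walks from p₀
  have reachP : ∀ q : V, q ∈ P → ∃ w : H.Walk p₀ q, ∀ a ∈ w.support, a ∈ P := by
    intro q hq
    obtain ⟨wi⟩ := hP.preconnected p₀' ⟨q, hq⟩
    refine ⟨wi.map (SimpleGraph.Embedding.induce P).toHom, ?_⟩
    intro a ha
    have ha : a ∈ (wi.map (SimpleGraph.Embedding.induce P).toHom).support := ha
    rw [SimpleGraph.Walk.support_map, List.mem_map] at ha
    obtain ⟨b, -, rfl⟩ := ha
    exact b.2
  have hM : ∀ x : V, x ∈ T₁ → x ∈ T₂ →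
      ∃ w : H.Walk p₀ x, ∀ a ∈ w.support, a ∈ T₁ ∧ a ∈ T₂ := by
    intro x hx1 hx2
    obtain ⟨b, hbP, wb, hblen⟩ := hMem x hx1 hx2
    obtain ⟨wp, hwp⟩ := reachP b hbP
    refine ⟨wp.append wb, ?_⟩
    intro a ha
    have haP : a ∈ closedNbhd H i P := by
      rw [SimpleGraph.Walk.mem_support_append_iff] at ha
      rcases ha with ha | ha
      · exact mem_closedNbhd_of_mem (hwp a ha)
      · exact support_subset_closedNbhd hbP wb hblen a ha
    exact ⟨hPT₁ haP, hPT₂ haP⟩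
  have hE₁ : ∀ {v : V} (w : H.Walk v v), (∀ x ∈ w.support, x ∈ T₁) → Even (w.wt ω) :=
    fun {v} w hs => evenClosed ω h1 w.length w le_rfl hs
  have hE₂ : ∀ {v : V} (w : H.Walk v v), (∀ x ∈ w.support, x ∈ T₂) → Even (w.wt ω) :=
    fun {v} w hs => evenClosed ω h2 w.length w le_rfl hs
  -- the main argument
  intro v c hc hsupc
  have hsupS : ∀ a ∈ c.support, a ∈ T₁ ∪ T₂ := by
    intro a ha
    have := hsupc a ha
    rw [closedNbhd_union i (B₁ ∪ B₂) P, closedNbhd_union i B₁ B₂] at this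
    rcases this with (h | h) | h
    · exact Or.inl (by rw [hT₁eq]; exact Or.inl h)
    · exact Or.inr (by rw [hT₂eq]; exact Or.inl h)
    · exact Or.inl (hPT₁ h)
  by_cases hall1 : ∀ a ∈ c.support, a ∈ T₁
  · exact h1 c hc hall1
  by_cases hall2 : ∀ a ∈ c.support, a ∈ T₂
  · exact h2 c hc hall2
  push_neg at hall1 hall2
  obtain ⟨a, haS, ha1⟩ := hall1
  obtain ⟨b, hbS, hb2⟩ := hall2
  have ha2 : a ∈ T₂ := (hsupS a haS).resolve_left ha1
  -- a walk from b to a inside the support of c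
  obtain ⟨q, hqsup⟩ : ∃ q : H.Walk b a, ∀ z ∈ q.support, z ∈ c.support := by
    have hsp := c.take_spec hbS
    have hmem : a ∈ (c.takeUntil b hbS).support ∨ a ∈ (c.dropUntil b hbS).support := by
      rw [← SimpleGraph.Walk.mem_support_append_iff, hsp]
      exact haS
    rcases hmem with hmem | hmem
    · refine ⟨((c.takeUntil b hbS).dropUntil a hmem).reverse, ?_⟩
      intro z hz
      rw [SimpleGraph.Walk.support_reverse, List.mem_reverse] at hz
      exact c.support_takeUntil_subset hbS ((c.takeUntil b hbS).support_dropUntil_subset hmem hz)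
    · refine ⟨(c.dropUntil b hbS).takeUntil a hmem, ?_⟩
      intro z hz
      exact c.support_dropUntil_subset hbS ((c.dropUntil b hbS).support_takeUntil_subset hmem hz)
  obtain ⟨m, hmq, hm1, hm2⟩ := findMid hA12 q (fun z hz => hsupS z (hqsup z hz)) hb2 ha2
  have hmc : m ∈ c.support := hqsup m hmq
  obtain ⟨wm, hwm⟩ := hM m hm1 hm2
  -- transport the witness to the basepoint v of the cycle
  obtain ⟨wv, hwv, -⟩ := coreA ω hE₁ hE₂ hA12 hA21 hM (c.takeUntil m hmc).reverse
    (by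
      intro z hz
      rw [SimpleGraph.Walk.support_reverse, List.mem_reverse] at hz
      exact hsupS z (c.support_takeUntil_subset hmc hz))
    wm (Or.inl (fun z hz => (hwm z hz).1))
  obtain ⟨wv', hwv', hev⟩ := coreA ω hE₁ hE₂ hA12 hA21 hM c hsupS wv hwv
  have hwd := wd ω hE₁ hE₂ hM wv wv' hwv hwv'
  rw [Nat.not_odd_iff_even]
  obtain ⟨k1, hk1⟩ := hev
  obtain ⟨k2, hk2⟩ := hwd
  exact ⟨k1 - k2, by omega⟩
end
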